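/- Let (σ,τ) be a persistence pair of base simplices in the cone filtration with min σ = b < d = min τ (low R[τ] = σ). Then the relative cycle ẑ produced by Lift-Cycle(V[τ], (d,b), 0) is an apex representative in H(K̂(b,d]): [ẑ] lies neither in the image of H(K̂(b−1,d]) → H(K̂(b,d]) nor in the image of H(K̂(b,d−1]) → H(K̂(b,d]). -/

import Mathlib

open Finsupp
open scoped Classical

/-- A finite Δ-complex over a field `F`: each cell has a dimension, a boundary chain,
and an integer support interval `T(σ) = [tmin σ, tmax σ] ⊆ [0, n]`; whenever `σ` appears
in `∂τ` one has `tmin σ < tmin τ < tmax τ < tmax σ`. -/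
structure DeltaComplex (F : Type) [Field F] (n : ℤ) where
  Cell : Type
  deq : DecidableEq Cell
  fin : Fintype Cell
  dim : Cell → ℕ
  tmin : Cell → ℤ
  tmax : Cell → ℤ
  bdry : Cell → (Cell →₀ F)
  tmin_nonneg : ∀ σ, 0 ≤ tmin σ
  tmin_lt_tmax : ∀ σ, tmin σ < tmax σ
  tmax_le : ∀ σ, tmax σ ≤ n
  bdry_dim : ∀ τ σ, bdry τ σ ≠ 0 → dim σ + 1 = dim τ
  nest : ∀ τ σ, bdry τ σ ≠ 0 → tmin σ < tmin τ ∧ tmax τ < tmax σ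
  bdry_bdry : ∀ τ, ((bdry τ).sum fun σ a => a • bdry σ) = 0

attribute [instance] DeltaComplex.deq DeltaComplex.fin

variable {F : Type} [Field F] {n : ℤ}

/-- The boundary of a chain of `K`. -/
noncomputable def bd (K : DeltaComplex F n) (c : K.Cell →₀ F) : K.Cell →₀ F :=
  c.sum fun τ a => a • K.bdry τ

/-- A chain is supported on a set of cells. -/
def SuppOn {α β : Type} [Zero β] (c : α →₀ β) (S : α → Prop) : Prop :=
  ∀ x, c x ≠ 0 → S x

/-- Cells of the prism `K̂`: vertical cells `σ×{i}` and horizontal cells `σ×[i,i+1]`. -/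
inductive PCell (C : Type) where
  | vert : C → ℤ → PCell C
  | horiz : C → ℤ → PCell C
deriving DecidableEq

/-- Membership of a prism cell in the prism `K̂`. -/
def inPrism (K : DeltaComplex F n) : PCell K.Cell → Prop
  | .vert σ i => K.tmin σ ≤ i ∧ i ≤ K.tmax σ
  | .horiz σ i => K.tmin σ ≤ i ∧ i + 1 ≤ K.tmax σ

/-- Membership of a prism cell in the interlevel subcomplex `K̂_i^j` (cells `σ×T` with
`T ⊆ [i,j]`). -/
def inSub (K : DeltaComplex F n) (i j : ℤ) : PCell K.Cell → Prop
  | .vert σ t => (K.tmin σ ≤ t ∧ t ≤ K.tmax σ) ∧ i ≤ t ∧ t ≤ j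
  | .horiz σ t => (K.tmin σ ≤ t ∧ t + 1 ≤ K.tmax σ) ∧ i ≤ t ∧ t + 1 ≤ j

/-- The boundary of a single prism cell: `∂(τ×i) = (∂τ)×i` and
`∂(σ×[i,i+1]) = σ×(i+1) − σ×i − (∂σ)×[i,i+1]`. -/
noncomputable def pcellBd (K : DeltaComplex F n) : PCell K.Cell → (PCell K.Cell →₀ F)
  | .vert τ i => (K.bdry τ).sum fun σ a => Finsupp.single (PCell.vert σ i) a
  | .horiz σ i =>
      Finsupp.single (PCell.vert σ (i + 1)) 1 - Finsupp.single (PCell.vert σ i) 1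
        - (K.bdry σ).sum fun ρ a => Finsupp.single (PCell.horiz ρ i) a

/-- The boundary of a prism chain. -/
noncomputable def pbd (K : DeltaComplex F n) (c : PCell K.Cell →₀ F) : PCell K.Cell →₀ F :=
  c.sum fun x a => a • pcellBd K x

/-- `z` is a relative cycle of the pair of subcomplexes `(A, B)` of the prism. -/
def RelCycle (K : DeltaComplex F n) (A B : PCell K.Cell → Prop)
    (z : PCell K.Cell →₀ F) : Prop :=
  SuppOn z A ∧ SuppOn (pbd K z) B

/-- The homology class `[z] ∈ H(A,B)` lies in the image of the map
`H(A',B') → H(A,B)` induced by the inclusion of pairs `(A',B') ⊆ (A,B)`: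
there is a relative cycle `α` of `(A',B')` homologous to `z` within `(A,B)`. -/
def InImg (K : DeltaComplex F n) (A' B' A B : PCell K.Cell → Prop)
    (z : PCell K.Cell →₀ F) : Prop :=
  ∃ α β γ : PCell K.Cell →₀ F,
    RelCycle K A' B' α ∧ SuppOn β A ∧ SuppOn γ B ∧ z = α + pbd K β + γ

/-- The vertical prism chain `w × t`. -/
noncomputable def vchain (K : DeltaComplex F n) (w : K.Cell →₀ F) (t : ℤ) :
    PCell K.Cell →₀ F :=
  w.sum fun σ a => Finsupp.single (PCell.vert σ t) a

/-- A valid choice of times for Lift-Cycle: for every simplex `τ` of `z` with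
`T(τ) ∩ [b,d] ≠ ∅`, the chosen time satisfies `t τ ∈ T(τ) ∩ [b,d]`. -/
def ValidTimes (K : DeltaComplex F n) (z : K.Cell →₀ F) (b d : ℤ) (t : K.Cell → ℤ) : Prop :=
  ∀ τ, z τ ≠ 0 → K.tmin τ ≤ d → b ≤ K.tmax τ →
    K.tmin τ ≤ t τ ∧ t τ ≤ K.tmax τ ∧ b ≤ t τ ∧ t τ ≤ d

/-- The chain `ẑ` produced by `Lift-Cycle(z, (s,f), w₀)` with the choice of times `t`
(here `b = min s f`, `d = max s f`): the sum of the vertical cells `⟨τ,z⟩·(τ×t_τ)` over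
simplices `τ` of `z` with `T(τ) ∩ [b,d] ≠ ∅`, plus horizontal cells `σ×[k,k+1]`
(oriented from `s` to `f`) whose coefficient is the running sum
`⟨σ,w₀⟩ + Σ ⟨τ,z⟩·⟨σ,∂τ⟩` over the cofaces `τ` whose time `t_τ` has already been passed
when traversing from `s` to `f`. -/
noncomputable def liftCycle (K : DeltaComplex F n) (z : K.Cell →₀ F) (s f : ℤ)
    (w0 : K.Cell →₀ F) (t : K.Cell → ℤ) : PCell K.Cell →₀ F :=
  (∑ τ ∈ z.support.filter (fun τ => K.tmin τ ≤ max s f ∧ min s f ≤ K.tmax τ),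
      Finsupp.single (PCell.vert τ (t τ)) (z τ))
  + ∑ σ : K.Cell, ∑ k ∈ Finset.Icc (min s f) (max s f - 1),
      Finsupp.single (PCell.horiz σ k)
        ((if s ≤ f then (1 : F) else -1) *
          (w0 σ +
            ∑ τ ∈ z.support.filter (fun τ =>
                (K.tmin τ ≤ max s f ∧ min s f ≤ K.tmax τ) ∧
                  (if s ≤ f then t τ ≤ k else k + 1 ≤ t τ)),
              z τ * (K.bdry τ) σ))

/-- Cells of the cone `K̄ = ω ∗ K`: base simplices, the cone vertex `ω`,
and cone simplices `σ̄ = ω ∗ σ`. -/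
inductive CCell (C : Type) where
  | base : C → CCell C
  | omega : CCell C
  | cone : C → CCell C
deriving DecidableEq

/-- Boundary of a single cell of the cone `K̄`:
`∂σ` for base simplices, `0` for `ω`, and `∂(ω∗σ) = σ − ω∗∂σ` (minus `ω` when `σ` is a
vertex) for cone simplices. -/
noncomputable def ccellBd (K : DeltaComplex F n) : CCell K.Cell → (CCell K.Cell →₀ F)
  | .base σ => (K.bdry σ).sum fun ρ a => Finsupp.single (CCell.base ρ) a
  | .omega => 0
  | .cone σ =>
      Finsupp.single (CCell.base σ) 1
        - (K.bdry σ).sum (fun ρ a => Finsupp.single (CCell.cone ρ) a)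
        - (if K.dim σ = 0 then Finsupp.single CCell.omega 1 else 0)

/-- The boundary of a chain of the cone `K̄`. -/
noncomputable def cbd (K : DeltaComplex F n) (c : CCell K.Cell →₀ F) : CCell K.Cell →₀ F :=
  c.sum fun x a => a • ccellBd K x

/-- The restriction `c ∩ K` of a cone chain to the base simplices, as a chain in `K`. -/
noncomputable def basePart (K : DeltaComplex F n) (c : CCell K.Cell →₀ F) : K.Cell →₀ F :=
  c.sum fun x a =>
    match x with
    | .base σ => Finsupp.single σ a
    | .omega => 0
    | .cone _ => 0

/-- The restriction `c ∩ (K̄ − K)` of a cone chain to the cells not in the base. -/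
noncomputable def conePart (K : DeltaComplex F n) (c : CCell K.Cell →₀ F) :
    CCell K.Cell →₀ F :=
  c.sum fun x a =>
    match x with
    | .base _ => 0
    | .omega => Finsupp.single CCell.omega a
    | .cone ρ => Finsupp.single (CCell.cone ρ) a

/-- The order of the cells of `K̄` in the cone filtration: base simplices by increasing
`min σ`, then `ω`, then cone simplices by decreasing `max σ`, ties broken consistently
so that every prefix is a subcomplex. -/
structure ConeOrder (K : DeltaComplex F n) where
  pos : CCell K.Cell → ℕ
  inj : Function.Injective pos
  base_lt_base : ∀ σ τ : K.Cell, K.tmin σ < K.tmin τ → pos (.base σ) < pos (.base τ)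
  base_lt_omega : ∀ σ : K.Cell, pos (.base σ) < pos .omega
  omega_lt_cone : ∀ σ : K.Cell, pos .omega < pos (.cone σ)
  cone_lt_cone : ∀ σ τ : K.Cell, K.tmax τ < K.tmax σ → pos (.cone σ) < pos (.cone τ)
  faces_first : ∀ x y, (ccellBd K x) y ≠ 0 → pos y < pos x

/-- `σ` is the pivot (lowest nonzero entry) of the column (chain) `c`. -/
def IsLow (K : DeltaComplex F n) (O : ConeOrder K) (c : CCell K.Cell →₀ F)
    (σ : CCell K.Cell) : Prop :=
  c σ ≠ 0 ∧ ∀ ρ, c ρ ≠ 0 → O.pos ρ ≤ O.pos σ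

/-- `R = DV` is a decomposition of the boundary matrix `D` of the cone filtration:
`V` is invertible upper-triangular and `R` is reduced (pivots of nonzero columns lie
in pairwise distinct rows). -/
structure IsReduction (K : DeltaComplex F n) (O : ConeOrder K)
    (R V : CCell K.Cell → (CCell K.Cell →₀ F)) : Prop where
  rdv : ∀ τ, R τ = cbd K (V τ)
  upper : ∀ τ ρ, (V τ) ρ ≠ 0 → O.pos ρ ≤ O.pos τ
  diag : ∀ τ, (V τ) τ ≠ 0
  reduced : ∀ τ τ' σ, τ ≠ τ' → IsLow K O (R τ) σ → ¬ IsLow K O (R τ') σ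

/-- One run of the lazy (standard left-to-right) reduction of the column of `τ`:
starting from a column `c` (with coefficient vector `v`), while the column is nonzero
and its pivot collides with the pivot of an earlier (already reduced) column, subtract
the appropriate scalar multiple of that column. -/
inductive LazyReduces (K : DeltaComplex F n) (O : ConeOrder K)
    (R V : CCell K.Cell → (CCell K.Cell →₀ F)) (τ : CCell K.Cell) :
    (CCell K.Cell →₀ F) → (CCell K.Cell →₀ F) →
      (CCell K.Cell →₀ F) → (CCell K.Cell →₀ F) → Prop
  | done (c v : CCell K.Cell →₀ F)
      (h : ∀ σ, IsLow K O c σ → ∀ τ', O.pos τ' < O.pos τ → ¬ IsLow K O (R τ') σ) :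
      LazyReduces K O R V τ c v c v
  | step (c v c' v' : CCell K.Cell →₀ F) (τ' σ : CCell K.Cell)
      (hlt : O.pos τ' < O.pos τ) (hc : IsLow K O c σ) (hr : IsLow K O (R τ') σ)
      (next : LazyReduces K O R V τ (c - (c σ / ((R τ') σ)) • R τ')
        (v - (c σ / ((R τ') σ)) • V τ') c' v') :
      LazyReduces K O R V τ c v c' v'

/-- `R = DV` is obtained by the lazy reduction: every column `R τ` (with coefficient
column `V τ`) is the result of the lazy reduction of the boundary column of `τ`,
columns being processed from left to right. -/
def IsLazyReduction (K : DeltaComplex F n) (O : ConeOrder K)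
    (R V : CCell K.Cell → (CCell K.Cell →₀ F)) : Prop :=
  ∀ τ, LazyReduces K O R V τ (ccellBd K τ) (Finsupp.single τ 1) (R τ) (V τ)

/-!
Lift-Cycle lifts each simplex `τ'` of `z = V[τ] ∩ K` to `τ' × t_τ' − (∂τ') × [b, t_τ']`, whose
boundary is `(∂τ') × b`; so `∂ẑ = (∂z') × b`, where `z'` is the part of `z` alive during `[b, d]`,
and `ẑ` is a relative cycle. Reading a decomposition `ẑ = α + ∂β + γ` off at the vertical
level `b` (resp. `d`) gives a chain `u` of `K` with `∂u ≡ ∂z` modulo cells born before `b`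
(resp. `∂u ≡ z` modulo cells born before `d`), with `u` born before `τ` in the first case.
In the reduced matrix the first would make `σ` the pivot of a column to the left of `τ`; the
second would make `τ` the pivot of a nonzero cycle column, which forces `R[τ] = 0`.
-/

theorem sum_Ico_int_sub {G : Type*} [AddCommGroup G] (f : ℤ → G) {a b : ℤ} (h : a ≤ b) :
    ∑ i ∈ Finset.Ico a b, (f (i + 1) - f i) = f b - f a := by
  induction b, h using Int.leInduction with
  | base => simp
  | succ m hm ih =>
    rw [Finset.Ico_add_one_right_eq_Icc, ← Finset.Ico_insert_right hm,
      Finset.sum_insert (by simp), ih]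
    abel

theorem linearCombination_apply_apply {S ι κ : Type*} [Semiring S] (v : ι → κ →₀ S)
    (a : ι →₀ S) (y : κ) :
    Finsupp.linearCombination S v a y = ∑ x ∈ a.support, a x * v x y := by
  rw [Finsupp.linearCombination_apply, Finsupp.sum_apply, Finsupp.sum]
  rfl

theorem PCell.vert_left_injective {C : Type} (i : ℤ) :
    Function.Injective (PCell.vert · i : C → PCell C) :=
  fun _ _ h => (PCell.vert.inj h).1

theorem PCell.horiz_left_injective {C : Type} (k : ℤ) :
    Function.Injective (PCell.horiz · k : C → PCell C) :=
  fun _ _ h => (PCell.horiz.inj h).1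

theorem CCell.base_injective {C : Type} : Function.Injective (CCell.base : C → CCell C) :=
  fun _ _ => CCell.base.inj

section SuppOn

variable {α M : Type} [AddGroup M] {S : α → Prop} {c c' : α →₀ M}

theorem SuppOn.eq_zero (h : SuppOn c S) {x : α} (hx : ¬ S x) : c x = 0 :=
  not_imp_comm.mp (h x) hx

theorem SuppOn.add (h : SuppOn c S) (h' : SuppOn c' S) : SuppOn (c + c') S := fun x hx =>
  by_contra fun hS => hx (by rw [Finsupp.add_apply, h.eq_zero hS, h'.eq_zero hS, add_zero])

theorem SuppOn.neg (h : SuppOn c S) : SuppOn (-c) S := fun x hx =>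
  h x (by rwa [Finsupp.neg_apply, neg_ne_zero] at hx)

theorem SuppOn.sub (h : SuppOn c S) (h' : SuppOn c' S) : SuppOn (c - c') S := by
  rw [sub_eq_add_neg]; exact h.add h'.neg

theorem SuppOn.mono {T : α → Prop} (h : SuppOn c S) (hST : ∀ x, S x → T x) : SuppOn c T :=
  fun x hx => hST x (h x hx)

end SuppOn

section Chains

variable (K : DeltaComplex F n)

theorem bd_eq_linearCombination : bd K = Finsupp.linearCombination F K.bdry :=
  funext fun c => (Finsupp.linearCombination_apply F c).symm

theorem pbd_eq_linearCombination : pbd K = Finsupp.linearCombination F (pcellBd K) :=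
  funext fun c => (Finsupp.linearCombination_apply F c).symm

theorem cbd_eq_linearCombination : cbd K = Finsupp.linearCombination F (ccellBd K) :=
  funext fun c => (Finsupp.linearCombination_apply F c).symm

@[simp] theorem bd_bdry (τ : K.Cell) : bd K (K.bdry τ) = 0 := K.bdry_bdry τ

theorem bd_bd (c : K.Cell →₀ F) : bd K (bd K c) = 0 := by
  have h : bd K ∘ K.bdry = 0 := funext (bd_bdry K)
  rw [bd_eq_linearCombination, Finsupp.apply_linearCombination, ← bd_eq_linearCombination, h,
    Finsupp.linearCombination_zero, LinearMap.zero_apply]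

theorem exists_bdry_ne_zero_of_bd_ne_zero {c : K.Cell →₀ F} {ρ : K.Cell} (h : bd K c ρ ≠ 0) :
    ∃ τ, c τ ≠ 0 ∧ K.bdry τ ρ ≠ 0 := by
  rw [bd, Finsupp.sum_apply] at h
  obtain ⟨τ, hτ, hne⟩ := Finset.exists_ne_zero_of_sum_ne_zero h
  exact ⟨τ, Finsupp.mem_support_iff.mp hτ, right_ne_zero_of_smul hne⟩

end Chains

section Prism

variable (K : DeltaComplex F n)

noncomputable def hchain (w : K.Cell →₀ F) (k : ℤ) : PCell K.Cell →₀ F :=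
  w.mapDomain (PCell.horiz · k)

@[simp] theorem vchain_zero (i : ℤ) : vchain K 0 i = 0 := Finsupp.mapDomain_zero

@[simp] theorem vchain_add (w w' : K.Cell →₀ F) (i : ℤ) :
    vchain K (w + w') i = vchain K w i + vchain K w' i := Finsupp.mapDomain_add

@[simp] theorem vchain_smul (a : F) (w : K.Cell →₀ F) (i : ℤ) :
    vchain K (a • w) i = a • vchain K w i := Finsupp.mapDomain_smul a w

@[simp] theorem vchain_single (σ : K.Cell) (a : F) (i : ℤ) :
    vchain K (Finsupp.single σ a) i = Finsupp.single (.vert σ i) a := Finsupp.mapDomain_single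

@[simp] theorem hchain_zero (k : ℤ) : hchain K 0 k = 0 := Finsupp.mapDomain_zero

@[simp] theorem hchain_add (w w' : K.Cell →₀ F) (k : ℤ) :
    hchain K (w + w') k = hchain K w k + hchain K w' k := Finsupp.mapDomain_add

@[simp] theorem hchain_smul (a : F) (w : K.Cell →₀ F) (k : ℤ) :
    hchain K (a • w) k = a • hchain K w k := Finsupp.mapDomain_smul a w

@[simp] theorem hchain_single (σ : K.Cell) (a : F) (k : ℤ) :
    hchain K (Finsupp.single σ a) k = Finsupp.single (.horiz σ k) a := Finsupp.mapDomain_single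

theorem pcellBd_vert (τ : K.Cell) (i : ℤ) : pcellBd K (.vert τ i) = vchain K (K.bdry τ) i := rfl

theorem pcellBd_horiz (σ : K.Cell) (k : ℤ) :
    pcellBd K (.horiz σ k) = Finsupp.single (.vert σ (k + 1)) 1 - Finsupp.single (.vert σ k) 1
      - hchain K (K.bdry σ) k := rfl

@[simp] theorem pbd_zero : pbd K 0 = 0 := by
  simp [pbd_eq_linearCombination]

@[simp] theorem pbd_add (c c' : PCell K.Cell →₀ F) : pbd K (c + c') = pbd K c + pbd K c' := by
  simp [pbd_eq_linearCombination]

@[simp] theorem pbd_sub (c c' : PCell K.Cell →₀ F) : pbd K (c - c') = pbd K c - pbd K c' := by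
  simp [pbd_eq_linearCombination]

@[simp] theorem pbd_smul (a : F) (c : PCell K.Cell →₀ F) : pbd K (a • c) = a • pbd K c := by
  simp [pbd_eq_linearCombination]

theorem pbd_sum {ι : Type*} (s : Finset ι) (c : ι → PCell K.Cell →₀ F) :
    pbd K (∑ i ∈ s, c i) = ∑ i ∈ s, pbd K (c i) := by
  simp [pbd_eq_linearCombination]

@[simp] theorem pbd_single (x : PCell K.Cell) (a : F) :
    pbd K (Finsupp.single x a) = a • pcellBd K x := by
  simp [pbd_eq_linearCombination]

@[simp] theorem bd_zero : bd K 0 = 0 := by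
  simp [bd_eq_linearCombination]

@[simp] theorem bd_add (c c' : K.Cell →₀ F) : bd K (c + c') = bd K c + bd K c' := by
  simp [bd_eq_linearCombination]

@[simp] theorem bd_single (σ : K.Cell) (a : F) : bd K (Finsupp.single σ a) = a • K.bdry σ := by
  simp [bd_eq_linearCombination]

theorem pbd_vchain (w : K.Cell →₀ F) (i : ℤ) : pbd K (vchain K w i) = vchain K (bd K w) i := by
  induction w using Finsupp.induction_linear with
  | zero => simp
  | add w w' hw hw' => simp [hw, hw']
  | single σ a => simp [pcellBd_vert]

theorem pbd_hchain (w : K.Cell →₀ F) (k : ℤ) :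
    pbd K (hchain K w k) = vchain K w (k + 1) - vchain K w k - hchain K (bd K w) k := by
  induction w using Finsupp.induction_linear with
  | zero => simp
  | add w w' hw hw' => simp only [hchain_add, pbd_add, bd_add, vchain_add, hw, hw']; abel
  | single σ a => simp [pcellBd_horiz, smul_sub, Finsupp.smul_single]

theorem pbd_pbd (c : PCell K.Cell →₀ F) : pbd K (pbd K c) = 0 := by
  induction c using Finsupp.induction_linear with
  | zero => simp
  | add c c' hc hc' => simp [hc, hc']
  | single x a =>
    cases x with
    | vert τ i => simp [pcellBd_vert, pbd_vchain]
    | horiz σ k => simp [pcellBd_horiz, pcellBd_vert, pbd_hchain]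

theorem vchain_apply_vert (w : K.Cell →₀ F) (i : ℤ) (ρ : K.Cell) (j : ℤ) :
    vchain K w i (.vert ρ j) = if i = j then w ρ else 0 := by
  split_ifs with h
  · subst h
    exact Finsupp.mapDomain_apply (PCell.vert_left_injective _) w ρ
  · exact Finsupp.mapDomain_of_notMem_range _ _ (by rintro ⟨_, h⟩; cases h; exact h rfl)

theorem vchain_apply_horiz (w : K.Cell →₀ F) (i : ℤ) (ρ : K.Cell) (k : ℤ) :
    vchain K w i (.horiz ρ k) = 0 :=
  Finsupp.mapDomain_of_notMem_range _ _ (by rintro ⟨_, h⟩; cases h)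

theorem hchain_apply_vert (w : K.Cell →₀ F) (k : ℤ) (ρ : K.Cell) (i : ℤ) :
    hchain K w k (.vert ρ i) = 0 :=
  Finsupp.mapDomain_of_notMem_range _ _ (by rintro ⟨_, h⟩; cases h)

theorem hchain_apply_horiz (w : K.Cell →₀ F) (k : ℤ) (ρ : K.Cell) (j : ℤ) :
    hchain K w k (.horiz ρ j) = if k = j then w ρ else 0 := by
  split_ifs with h
  · subst h
    exact Finsupp.mapDomain_apply (PCell.horiz_left_injective _) w ρ
  · exact Finsupp.mapDomain_of_notMem_range _ _ (by rintro ⟨_, h⟩; cases h; exact h rfl)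

end Prism

section Slice

variable (K : DeltaComplex F n)

noncomputable def vslice (m : ℤ) : (PCell K.Cell →₀ F) →ₗ[F] (K.Cell →₀ F) :=
  Finsupp.lcomapDomain (PCell.vert · m) (PCell.vert_left_injective m)

noncomputable def hslice (k : ℤ) : (PCell K.Cell →₀ F) →ₗ[F] (K.Cell →₀ F) :=
  Finsupp.lcomapDomain (PCell.horiz · k) (PCell.horiz_left_injective k)

@[simp] theorem vslice_apply (m : ℤ) (c : PCell K.Cell →₀ F) (ρ : K.Cell) :
    vslice K m c ρ = c (.vert ρ m) := rfl

@[simp] theorem hslice_apply (k : ℤ) (c : PCell K.Cell →₀ F) (ρ : K.Cell) :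
    hslice K k c ρ = c (.horiz ρ k) := rfl

theorem vslice_vchain (m : ℤ) (w : K.Cell →₀ F) (i : ℤ) :
    vslice K m (vchain K w i) = if i = m then w else 0 := by
  ext ρ; split_ifs <;> simp [vchain_apply_vert, *]

theorem vslice_hchain (m : ℤ) (w : K.Cell →₀ F) (k : ℤ) : vslice K m (hchain K w k) = 0 := by
  ext ρ; simp [hchain_apply_vert]

theorem hslice_vchain (m : ℤ) (w : K.Cell →₀ F) (i : ℤ) : hslice K m (vchain K w i) = 0 := by
  ext ρ; simp [vchain_apply_horiz]

theorem hslice_hchain (m : ℤ) (w : K.Cell →₀ F) (k : ℤ) :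
    hslice K m (hchain K w k) = if k = m then w else 0 := by
  ext ρ; split_ifs <;> simp [hchain_apply_horiz, *]

theorem vslice_pbd (m : ℤ) (c : PCell K.Cell →₀ F) :
    vslice K m (pbd K c) = bd K (vslice K m c) + hslice K (m - 1) c - hslice K m c := by
  induction c using Finsupp.induction_linear with
  | zero => simp
  | add c c' hc hc' => simp only [pbd_add, map_add, bd_add, hc, hc']; abel
  | single x a =>
    cases x with
    | vert π j =>
      rw [pbd_single, pcellBd_vert, ← vchain_single]
      simp only [map_smul, vslice_vchain, hslice_vchain]
      split_ifs <;> simp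
    | horiz π k =>
      rw [pbd_single, pcellBd_horiz, ← vchain_single, ← vchain_single, ← hchain_single]
      simp only [map_smul, map_sub, vslice_vchain, vslice_hchain, hslice_hchain]
      split_ifs <;> first | omega | simp

theorem vslice_eq_zero_of_suppOn {i j m : ℤ} {c : PCell K.Cell →₀ F}
    (hc : SuppOn c (inSub K i j)) (hjm : j < m) : vslice K m c = 0 := by
  ext ρ
  exact hc.eq_zero fun h => by have := h.2.2; omega

theorem hslice_eq_zero_of_suppOn {i j m : ℤ} {c : PCell K.Cell →₀ F}
    (hc : SuppOn c (inSub K i j)) (hjm : j ≤ m) : hslice K m c = 0 := by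
  ext ρ
  exact hc.eq_zero fun h => by have := h.2.2; omega

theorem exists_bd_add_eq_of_inImg_birth {b d : ℤ} {c : PCell K.Cell →₀ F} {w : K.Cell →₀ F}
    (hc : pbd K c = vchain K w b)
    (h : InImg K (inSub K (-1) d) (inSub K (-1) (b - 1)) (inSub K (-1) d) (inSub K (-1) b) c) :
    ∃ u v : K.Cell →₀ F, SuppOn u (fun ρ => K.tmin ρ ≤ b) ∧ SuppOn v (fun ρ => K.tmin ρ < b) ∧
      bd K u + v = w := by
  obtain ⟨α, β, γ, ⟨-, hα⟩, -, hγ, rfl⟩ := h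
  refine ⟨vslice K b γ, hslice K (b - 1) γ, fun ρ hρ => (hγ _ hρ).1.1,
    fun ρ hρ => by have := (hγ _ hρ).1.1; omega, ?_⟩
  calc bd K (vslice K b γ) + hslice K (b - 1) γ
      = vslice K b (pbd K (α + pbd K β + γ)) := by
        rw [pbd_add, pbd_add, pbd_pbd, add_zero, map_add, vslice_eq_zero_of_suppOn K hα (by omega),
          vslice_pbd, hslice_eq_zero_of_suppOn K hγ le_rfl]
        abel
    _ = w := by rw [hc, vslice_vchain, if_pos rfl]

theorem exists_bd_add_eq_of_inImg_death {b d : ℤ} (hbd : b < d) {c : PCell K.Cell →₀ F}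
    (h : InImg K (inSub K (-1) (d - 1)) (inSub K (-1) b) (inSub K (-1) d) (inSub K (-1) b) c) :
    ∃ u v : K.Cell →₀ F, SuppOn v (fun ρ => K.tmin ρ < d) ∧ bd K u + v = vslice K d c := by
  obtain ⟨α, β, γ, ⟨hα, -⟩, hβ, hγ, rfl⟩ := h
  refine ⟨vslice K d β, hslice K (d - 1) β, fun ρ hρ => by have := (hβ _ hρ).1.1; omega, ?_⟩
  rw [map_add, map_add, vslice_pbd, vslice_eq_zero_of_suppOn K hα (by omega),
    vslice_eq_zero_of_suppOn K hγ hbd, hslice_eq_zero_of_suppOn K hβ le_rfl]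
  abel

end Slice

section Lift

variable (K : DeltaComplex F n)

noncomputable def liftSimplex (b : ℤ) (τ : K.Cell) (s : ℤ) : PCell K.Cell →₀ F :=
  Finsupp.single (.vert τ s) 1 - ∑ k ∈ Finset.Ico b s, hchain K (K.bdry τ) k

theorem pbd_liftSimplex {b s : ℤ} (hbs : b ≤ s) (τ : K.Cell) :
    pbd K (liftSimplex K b τ s) = vchain K (K.bdry τ) b := by
  simp only [liftSimplex, pbd_sub, pbd_single, one_smul, pcellBd_vert, pbd_sum, pbd_hchain,
    bd_bdry, hchain_zero, sub_zero, sum_Ico_int_sub (vchain K (K.bdry τ)) hbs, sub_sub_cancel]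

noncomputable def meetPart (z : K.Cell →₀ F) (b d : ℤ) : K.Cell →₀ F :=
  z.filter fun τ => K.tmin τ ≤ d ∧ b ≤ K.tmax τ

variable {K} {z : K.Cell →₀ F} {b d : ℤ} {t : K.Cell → ℤ}

theorem linearCombination_meetPart {M : Type*} [AddCommGroup M] [Module F M] (g : K.Cell → M) :
    Finsupp.linearCombination F g (meetPart K z b d)
      = ∑ τ ∈ z.support with K.tmin τ ≤ d ∧ b ≤ K.tmax τ, z τ • g τ := by
  rw [Finsupp.linearCombination_apply, Finsupp.sum, meetPart, Finsupp.support_filter]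
  exact Finset.sum_congr rfl fun τ hτ => by
    rw [Finsupp.filter_apply_pos (p := fun τ => K.tmin τ ≤ d ∧ b ≤ K.tmax τ) _
      (Finset.mem_filter.mp hτ).2]

theorem ValidTimes.bounds (ht : ValidTimes K z b d t) {τ : K.Cell}
    (hτ : τ ∈ z.support.filter fun τ => K.tmin τ ≤ d ∧ b ≤ K.tmax τ) :
    K.tmin τ ≤ t τ ∧ t τ ≤ K.tmax τ ∧ b ≤ t τ ∧ t τ ≤ d := by
  simp only [Finset.mem_filter, Finsupp.mem_support_iff] at hτ
  exact ht τ hτ.1 hτ.2.1 hτ.2.2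

theorem liftCycle_eq_linearCombination (hbd : b < d) (ht : ValidTimes K z b d t) :
    liftCycle K z d b 0 t
      = Finsupp.linearCombination F (fun τ => liftSimplex K b τ (t τ)) (meetPart K z b d) := by
  rw [linearCombination_meetPart]
  ext x
  cases x with
  | vert ρ i =>
    simp [liftCycle, liftSimplex, Finsupp.finsetSum_apply, Finsupp.single_apply,
      hchain_apply_vert, max_eq_left hbd.le, min_eq_right hbd.le]
  | horiz ρ j =>
    simp only [liftCycle, max_eq_left hbd.le, min_eq_right hbd.le, not_le.mpr hbd, if_false,
      Finsupp.coe_zero, Pi.zero_apply, Order.add_one_le_iff, zero_add, neg_mul, one_mul,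
      Finsupp.single_neg, Finset.sum_neg_distrib, Finsupp.coe_add, Finsupp.coe_finsetSum,
      Finsupp.coe_neg, Pi.add_apply, Finset.sum_apply, Pi.neg_apply, Finsupp.single_apply,
      reduceCtorEq, Finset.sum_const_zero, PCell.horiz.injEq, liftSimplex,
      Finsupp.finsetSum_apply, Finsupp.coe_smul, Finsupp.coe_sub, Pi.smul_apply, Pi.sub_apply,
      hchain_apply_horiz, Finset.sum_ite_eq', Finset.mem_Ico, zero_sub, smul_eq_mul, mul_neg,
      mul_ite, mul_zero, neg_inj]
    rw [Finset.sum_eq_single ρ (fun x _ hx => Finset.sum_eq_zero fun k _ => if_neg (by tauto))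
      (by simp)]
    simp only [true_and, Finset.sum_ite_eq', Finset.mem_Icc]
    rw [← Finset.filter_filter, Finset.sum_filter]
    split_ifs with hj
    · refine Finset.sum_congr rfl fun x _ => ?_
      simp [hj.1]
    · refine (Finset.sum_eq_zero fun x hx => if_neg ?_).symm
      have := ht.bounds hx
      omega

theorem pbd_liftCycle (hbd : b < d) (ht : ValidTimes K z b d t) :
    pbd K (liftCycle K z d b 0 t) = vchain K (bd K (meetPart K z b d)) b := by
  have hv : vchain K (bd K (meetPart K z b d)) b
      = Finsupp.lmapDomain F F (PCell.vert · b) (bd K (meetPart K z b d)) := rfl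
  rw [hv, bd_eq_linearCombination, Finsupp.apply_linearCombination, linearCombination_meetPart,
    liftCycle_eq_linearCombination hbd ht, pbd_eq_linearCombination,
    Finsupp.apply_linearCombination, linearCombination_meetPart]
  refine Finset.sum_congr rfl fun τ hτ => ?_
  rw [Function.comp_apply, ← pbd_eq_linearCombination, pbd_liftSimplex K (ht.bounds hτ).2.2.1]
  rfl

theorem liftCycle_apply_vert (hbd : b < d) (ht : ValidTimes K z b d t) (ρ : K.Cell) (i : ℤ) :
    liftCycle K z d b 0 t (.vert ρ i) = if t ρ = i then meetPart K z b d ρ else 0 := by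
  rw [liftCycle_eq_linearCombination hbd ht, linearCombination_meetPart]
  simp only [liftSimplex, Finsupp.finsetSum_apply, Finsupp.coe_smul, Finsupp.coe_sub,
    Finsupp.coe_finsetSum, Pi.smul_apply, Pi.sub_apply, Finsupp.single_apply, PCell.vert.injEq,
    ite_and, Finset.sum_apply, hchain_apply_vert, Finset.sum_const_zero, sub_zero, smul_eq_mul,
    mul_ite, mul_one, mul_zero, Finset.sum_ite_eq', Finset.mem_filter, Finsupp.mem_support_iff,
    meetPart, Finsupp.filter_apply]
  split_ifs <;> simp_all

theorem liftCycle_apply_horiz (hbd : b < d) (ht : ValidTimes K z b d t) (ρ : K.Cell) (k : ℤ) :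
    liftCycle K z d b 0 t (.horiz ρ k)
      = -∑ τ ∈ z.support with K.tmin τ ≤ d ∧ b ≤ K.tmax τ,
          if b ≤ k ∧ k < t τ then z τ * K.bdry τ ρ else 0 := by
  rw [liftCycle_eq_linearCombination hbd ht, linearCombination_meetPart]
  simp [liftSimplex, Finsupp.finsetSum_apply, hchain_apply_horiz]

theorem suppOn_bd_sub_bd_meetPart (hz : SuppOn z fun τ => K.tmin τ ≤ d) :
    SuppOn (bd K z - bd K (meetPart K z b d)) fun ρ => K.tmin ρ < b := by
  have hsplit : bd K z - bd K (meetPart K z b d)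
      = bd K (z.filter fun τ => ¬ (K.tmin τ ≤ d ∧ b ≤ K.tmax τ)) := by
    rw [sub_eq_iff_eq_add', meetPart, ← bd_add, Finsupp.filter_add_filter_not]
  intro ρ hρ
  rw [hsplit] at hρ
  obtain ⟨τ, hτ, hτρ⟩ := exists_bdry_ne_zero_of_bd_ne_zero K hρ
  rw [Finsupp.filter_apply, ne_eq, ite_eq_right_iff, Classical.not_imp] at hτ
  have := hz τ hτ.2
  have := K.nest τ ρ hτρ
  have := K.tmin_lt_tmax τ
  omega

theorem suppOn_bd_meetPart (hz : SuppOn z fun τ => K.tmin τ ≤ d)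
    (hbz : SuppOn (bd K z) fun ρ => K.tmin ρ ≤ b) :
    SuppOn (bd K (meetPart K z b d)) fun ρ => K.tmin ρ ≤ b ∧ b ≤ K.tmax ρ := by
  intro ρ hρ
  obtain ⟨τ, hτ, hτρ⟩ := exists_bdry_ne_zero_of_bd_ne_zero K hρ
  rw [meetPart, Finsupp.filter_apply, ne_eq, ite_eq_right_iff, Classical.not_imp] at hτ
  have := K.nest τ ρ hτρ
  refine ⟨?_, by omega⟩
  by_contra hlt
  have heq := (suppOn_bd_sub_bd_meetPart (b := b) hz).eq_zero (x := ρ) (by omega)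
  rw [Finsupp.sub_apply, sub_eq_zero] at heq
  exact hlt (hbz ρ (heq ▸ hρ))

theorem mem_of_meetPart_ne_zero {ρ : K.Cell} (h : meetPart K z b d ρ ≠ 0) :
    ρ ∈ z.support.filter fun τ => K.tmin τ ≤ d ∧ b ≤ K.tmax τ := by
  rw [← Finsupp.support_filter]
  exact Finsupp.mem_support_iff.mpr h

theorem bd_meetPart_apply (ρ : K.Cell) :
    bd K (meetPart K z b d) ρ
      = ∑ τ ∈ z.support with K.tmin τ ≤ d ∧ b ≤ K.tmax τ, z τ * K.bdry τ ρ := by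
  rw [bd_eq_linearCombination, linearCombination_meetPart, Finsupp.finsetSum_apply]
  rfl

theorem inSub_of_liftCycle_apply_horiz_ne_zero (hbd : b < d) (ht : ValidTimes K z b d t)
    (hW : SuppOn (bd K (meetPart K z b d)) fun ρ => K.tmin ρ ≤ b) {ρ : K.Cell} {k : ℤ}
    (hx : liftCycle K z d b 0 t (.horiz ρ k) ≠ 0) : inSub K (-1) d (.horiz ρ k) := by
  rw [liftCycle_apply_horiz hbd ht, neg_ne_zero] at hx
  obtain ⟨τ, hτ, hne⟩ := Finset.exists_ne_zero_of_sum_ne_zero hx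
  rw [ne_eq, ite_eq_right_iff, Classical.not_imp] at hne
  obtain ⟨⟨hbk, hkt⟩, hzτ⟩ := hne
  have hτρ := K.nest τ ρ (right_ne_zero_of_mul hzτ)
  have := ht.bounds hτ
  have := K.tmin_nonneg ρ
  -- if `k < tmin ρ`, every coface of `ρ` is lifted above `k`: the coefficient is all of `-∂z'(ρ)`
  have hmin : K.tmin ρ ≤ k := by
    by_contra hlt
    refine hlt ((hW ρ ?_).trans hbk)
    rwa [bd_meetPart_apply, ← Finset.sum_congr rfl fun τ' hτ' => ?_]
    by_cases h : K.bdry τ' ρ = 0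
    · simp [h]
    · have := K.nest τ' ρ h
      have := ht.bounds hτ'
      rw [if_pos ⟨hbk, by omega⟩]
  exact ⟨⟨hmin, by omega⟩, by omega, by omega⟩

theorem relCycle_liftCycle (hbd : b < d) (ht : ValidTimes K z b d t)
    (hz : SuppOn z fun τ => K.tmin τ ≤ d) (hbz : SuppOn (bd K z) fun ρ => K.tmin ρ ≤ b) :
    RelCycle K (inSub K (-1) d) (inSub K (-1) b) (liftCycle K z d b 0 t) := by
  have hW := suppOn_bd_meetPart hz hbz
  refine ⟨fun x hx => ?_, fun x hx => ?_⟩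
  · cases x with
    | vert ρ i =>
      rw [liftCycle_apply_vert hbd ht] at hx
      split_ifs at hx with hi
      · have := ht.bounds (mem_of_meetPart_ne_zero hx)
        have := K.tmin_nonneg ρ
        exact ⟨⟨by omega, by omega⟩, by omega, by omega⟩
      · exact absurd rfl hx
    | horiz ρ k =>
      exact inSub_of_liftCycle_apply_horiz_ne_zero hbd ht (hW.mono fun _ h => h.1) hx
  · rw [pbd_liftCycle hbd ht] at hx
    cases x with
    | vert ρ i =>
      rw [vchain_apply_vert] at hx
      split_ifs at hx with hi
      · have := hW ρ hx
        have := K.tmin_nonneg ρ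
        exact ⟨⟨by omega, by omega⟩, by omega, by omega⟩
      · exact absurd rfl hx
    | horiz ρ k => exact absurd (vchain_apply_horiz K _ _ _ _) hx

theorem suppOn_sub_vslice_liftCycle (hbd : b < d) (ht : ValidTimes K z b d t)
    (hz : SuppOn z fun τ => K.tmin τ ≤ d) :
    SuppOn (z - vslice K d (liftCycle K z d b 0 t)) fun ρ => K.tmin ρ < d := by
  intro ρ hρ
  have hzρ : z ρ ≠ 0 := fun h0 => hρ (by
    simp [liftCycle_apply_vert hbd ht, meetPart, Finsupp.filter_apply, h0])
  have := hz ρ hzρ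
  have := K.tmin_lt_tmax ρ
  by_cases hP : K.tmin ρ ≤ d ∧ b ≤ K.tmax ρ
  · have := ht ρ hzρ hP.1 hP.2
    have htρ : t ρ ≠ d := fun h => hρ (by
      simp [liftCycle_apply_vert hbd ht, meetPart, h, hP])
    omega
  · omega

end Lift

section Reduction

variable {K : DeltaComplex F n} {O : ConeOrder K}

theorem IsLow.unique {c : CCell K.Cell →₀ F} {y y' : CCell K.Cell} (h : IsLow K O c y)
    (h' : IsLow K O c y') : y = y' :=
  O.inj (le_antisymm (h'.2 y h.1) (h.2 y' h'.1))

theorem IsLow.add_of_lt {c e : CCell K.Cell →₀ F} {y : CCell K.Cell} (h : IsLow K O c y)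
    (he : ∀ x, e x ≠ 0 → O.pos x < O.pos y) : IsLow K O (c + e) y := by
  refine ⟨?_, fun x hx => ?_⟩
  · rw [Finsupp.add_apply, not_imp_comm.mp (he y) (lt_irrefl _), add_zero]
    exact h.1
  · by_cases hex : e x = 0
    · rw [Finsupp.add_apply, hex, add_zero] at hx
      exact h.2 x hx
    · exact (he x hex).le

theorem basePart_apply (c : CCell K.Cell →₀ F) (ρ : K.Cell) :
    basePart K c ρ = c (.base ρ) := by
  rw [basePart, Finsupp.sum_apply, Finsupp.sum, Finset.sum_eq_single (CCell.base ρ)]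
  · simp
  · intro y _ hne
    cases y with
    | base π => exact Finsupp.single_eq_of_ne' fun h => hne (h ▸ rfl)
    | omega => rfl
    | cone _ => rfl
  · intro h
    rw [Finsupp.notMem_support_iff.mp h]
    simp

theorem cbd_mapDomain_base (w : K.Cell →₀ F) :
    cbd K (w.mapDomain CCell.base) = (bd K w).mapDomain CCell.base := by
  induction w using Finsupp.induction_linear with
  | zero => simp [cbd_eq_linearCombination]
  | add w w' hw hw' =>
    rw [Finsupp.mapDomain_add, cbd_eq_linearCombination, map_add, ← cbd_eq_linearCombination,
      hw, hw', bd_add, Finsupp.mapDomain_add]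
  | single σ a =>
    rw [Finsupp.mapDomain_single, cbd_eq_linearCombination, Finsupp.linearCombination_single,
      bd_single, Finsupp.mapDomain_smul]
    rfl

theorem ConeOrder.tmin_le_of_pos_le (O : ConeOrder K) {ρ π : K.Cell}
    (h : O.pos (.base ρ) ≤ O.pos (.base π)) : K.tmin ρ ≤ K.tmin π :=
  not_lt.mp fun hlt => (O.base_lt_base π ρ hlt).not_ge h

theorem pos_lt_of_mapDomain_base_ne_zero {w : K.Cell →₀ F} {N : ℕ}
    (hw : ∀ ρ, w ρ ≠ 0 → O.pos (.base ρ) < N) {y : CCell K.Cell}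
    (hy : w.mapDomain CCell.base y ≠ 0) : O.pos y < N := by
  cases y with
  | base ρ => exact hw ρ (by rwa [Finsupp.mapDomain_apply CCell.base_injective] at hy)
  | omega => exact absurd (Finsupp.mapDomain_of_notMem_range _ _ (by rintro ⟨_, h⟩; cases h)) hy
  | cone ρ => exact absurd (Finsupp.mapDomain_of_notMem_range _ _ (by rintro ⟨_, h⟩; cases h)) hy

variable {R V : CCell K.Cell → (CCell K.Cell →₀ F)}

namespace IsReduction

theorem isLow_V (hRV : IsReduction K O R V) (x : CCell K.Cell) : IsLow K O (V x) x :=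
  ⟨hRV.diag x, hRV.upper x⟩

theorem exists_eq_linearCombination_V (hRV : IsReduction K O R V) (N : ℕ)
    (c : CCell K.Cell →₀ F) (hc : ∀ y, c y ≠ 0 → O.pos y < N) :
    ∃ a : CCell K.Cell →₀ F, (∀ x, a x ≠ 0 → O.pos x < N) ∧
      c = Finsupp.linearCombination F V a := by
  induction N generalizing c with
  | zero =>
    refine ⟨0, by simp, ?_⟩
    ext y
    by_contra h
    exact absurd (hc y (by simpa using h)) (by omega)
  | succ N ih =>
    by_cases hN : ∃ y, O.pos y = N
    · obtain ⟨y, hy⟩ := hN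
      have hc' : ∀ ρ, (c - (c y / V y y) • V y) ρ ≠ 0 → O.pos ρ < N := by
        intro ρ hρ
        have hρy : ρ ≠ y := by
          rintro rfl
          simp [div_mul_cancel₀ _ (hRV.diag ρ)] at hρ
        have hle : O.pos ρ ≤ N := by
          by_cases hcρ : c ρ = 0
          · rw [Finsupp.sub_apply, hcρ, Finsupp.smul_apply, zero_sub, neg_ne_zero] at hρ
            exact hy ▸ hRV.upper y ρ (right_ne_zero_of_smul hρ)
          · exact Nat.le_of_lt_succ (hc ρ hcρ)
        exact lt_of_le_of_ne hle fun h => hρy (O.inj (h.trans hy.symm))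
      obtain ⟨a, ha, hca⟩ := ih _ hc'
      refine ⟨a + Finsupp.single y (c y / V y y), fun x hx => ?_, ?_⟩
      · by_cases hxy : x = y
        · rw [hxy, hy]; exact Nat.lt_succ_self N
        · rw [Finsupp.add_apply, Finsupp.single_eq_of_ne hxy, add_zero] at hx
          exact Nat.lt_succ_of_lt (ha x hx)
      · rw [map_add, ← hca, Finsupp.linearCombination_single, sub_add_cancel]
    · obtain ⟨a, ha, hca⟩ := ih c fun y hy => lt_of_le_of_ne (Nat.le_of_lt_succ (hc y hy))
        fun h => hN ⟨y, h⟩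
      exact ⟨a, fun x hx => Nat.lt_succ_of_lt (ha x hx), hca⟩

theorem exists_isLow_linearCombination (hRV : IsReduction K O R V) (a : CCell K.Cell →₀ F)
    (ha : ∃ x, a x ≠ 0 ∧ R x ≠ 0) :
    ∃ x y, a x ≠ 0 ∧ IsLow K O (R x) y ∧ IsLow K O (Finsupp.linearCombination F R a) y := by
  set U := a.support.biUnion fun x => (R x).support
  have hU : U.Nonempty := by
    obtain ⟨x, hx, hR⟩ := ha
    obtain ⟨ρ, hρ⟩ := Finsupp.support_nonempty_iff.mpr hR
    exact ⟨ρ, Finset.mem_biUnion.mpr ⟨x, Finsupp.mem_support_iff.mpr hx, hρ⟩⟩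
  obtain ⟨y, hyU, hmax⟩ := U.exists_max_image O.pos hU
  have hpiv : ∀ x ∈ a.support, R x y ≠ 0 → IsLow K O (R x) y := fun x hx hxy =>
    ⟨hxy, fun ρ hρ => hmax ρ (Finset.mem_biUnion.mpr ⟨x, hx, Finsupp.mem_support_iff.mpr hρ⟩)⟩
  obtain ⟨x₀, hx₀, hx₀y⟩ := Finset.mem_biUnion.mp hyU
  rw [Finsupp.mem_support_iff] at hx₀y
  -- the columns share no pivot, so only `R x₀` reaches row `y`
  have hcoef : Finsupp.linearCombination F R a y = a x₀ * R x₀ y := by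
    rw [linearCombination_apply_apply, Finset.sum_eq_single x₀ _ (fun h => absurd hx₀ h)]
    intro x hx hne
    by_cases hxy : R x y = 0
    · simp [hxy]
    · exact absurd (hpiv x₀ hx₀ hx₀y) (hRV.reduced x x₀ y hne (hpiv x hx hxy))
  refine ⟨x₀, y, Finsupp.mem_support_iff.mp hx₀, hpiv x₀ hx₀ hx₀y, ?_, fun ρ hρ => ?_⟩
  · rw [hcoef]
    exact mul_ne_zero (Finsupp.mem_support_iff.mp hx₀) hx₀y
  · rw [linearCombination_apply_apply] at hρ
    obtain ⟨x, hx, hne⟩ := Finset.exists_ne_zero_of_sum_ne_zero hρ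
    exact hmax ρ (Finset.mem_biUnion.mpr ⟨x, hx, Finsupp.mem_support_iff.mpr
      (right_ne_zero_of_mul hne)⟩)

theorem cbd_linearCombination_V (hRV : IsReduction K O R V) (a : CCell K.Cell →₀ F) :
    cbd K (Finsupp.linearCombination F V a) = Finsupp.linearCombination F R a := by
  rw [cbd_eq_linearCombination, Finsupp.apply_linearCombination, ← cbd_eq_linearCombination]
  congr 2
  exact funext fun x => (hRV.rdv x).symm

theorem exists_isLow_R_of_isLow_cbd (hRV : IsReduction K O R V) {N : ℕ}
    {c : CCell K.Cell →₀ F} (hc : ∀ y, c y ≠ 0 → O.pos y < N) {y : CCell K.Cell}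
    (hlow : IsLow K O (cbd K c) y) : ∃ x, O.pos x < N ∧ IsLow K O (R x) y := by
  obtain ⟨a, ha, rfl⟩ := hRV.exists_eq_linearCombination_V N c hc
  rw [hRV.cbd_linearCombination_V] at hlow
  have hex : ∃ x, a x ≠ 0 ∧ R x ≠ 0 := by
    by_contra! h
    apply hlow.1
    rw [linearCombination_apply_apply]
    exact Finset.sum_eq_zero fun x hx => by rw [h x (Finsupp.mem_support_iff.mp hx)]; simp
  obtain ⟨x, y', hx, hxlow, hsum⟩ := hRV.exists_isLow_linearCombination a hex
  exact ⟨x, ha x hx, hsum.unique hlow ▸ hxlow⟩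

theorem eq_zero_of_isLow_of_cbd_eq_zero (hRV : IsReduction K O R V) {x y : CCell K.Cell}
    (hcyc : cbd K (R x) = 0) (hlow : IsLow K O (R x) y) : R y = 0 := by
  by_contra hy
  obtain ⟨a, ha, hRa⟩ := hRV.exists_eq_linearCombination_V (O.pos y + 1) (R x)
    fun ρ hρ => Nat.lt_succ_of_le (hlow.2 ρ hρ)
  -- among the columns `V w` with `w` up to `y`, only `V y` reaches row `y`
  have hay : a y ≠ 0 := by
    intro hay
    apply hlow.1
    rw [hRa, linearCombination_apply_apply]
    refine Finset.sum_eq_zero fun w hw => ?_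
    by_cases hwy : V w y = 0
    · rw [hwy, mul_zero]
    · have hw' : w = y := O.inj (Nat.le_antisymm (Nat.le_of_lt_succ
        (ha w (Finsupp.mem_support_iff.mp hw))) (hRV.upper w y hwy))
      rw [hw', hay, zero_mul]
  obtain ⟨_, _, _, _, hsum⟩ := hRV.exists_isLow_linearCombination a ⟨y, hay, hy⟩
  rw [← hRV.cbd_linearCombination_V, ← hRa, hcyc] at hsum
  exact hsum.1 rfl

theorem V_base_eq (hRV : IsReduction K O R V) (x : K.Cell) :
    V (.base x) = (basePart K (V (.base x))).mapDomain CCell.base := by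
  ext y
  cases y with
  | base ρ => rw [Finsupp.mapDomain_apply CCell.base_injective, basePart_apply]
  | omega =>
    rw [Finsupp.mapDomain_of_notMem_range _ _ (by rintro ⟨_, h⟩; cases h)]
    by_contra h
    exact (O.base_lt_omega x).not_ge (hRV.upper _ _ h)
  | cone ρ =>
    rw [Finsupp.mapDomain_of_notMem_range _ _ (by rintro ⟨_, h⟩; cases h)]
    by_contra h
    exact ((O.base_lt_omega x).trans (O.omega_lt_cone ρ)).not_ge (hRV.upper _ _ h)

theorem R_base_eq (hRV : IsReduction K O R V) (x : K.Cell) :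
    R (.base x) = (bd K (basePart K (V (.base x)))).mapDomain CCell.base := by
  rw [hRV.rdv, ← cbd_mapDomain_base, ← hRV.V_base_eq]

theorem cbd_R_base (hRV : IsReduction K O R V) (x : K.Cell) : cbd K (R (.base x)) = 0 := by
  rw [hRV.R_base_eq, cbd_mapDomain_base, bd_bd, Finsupp.mapDomain_zero]

theorem not_suppOn_bd_sub_bd_basePart (hRV : IsReduction K O R V) {σ τ : K.Cell}
    (hlow : IsLow K O (R (.base τ)) (.base σ)) {u : K.Cell →₀ F}
    (hu : SuppOn u fun ρ => K.tmin ρ < K.tmin τ) :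
    ¬ SuppOn (bd K u - bd K (basePart K (V (.base τ)))) fun ρ => K.tmin ρ < K.tmin σ := by
  intro he
  have hcbd : cbd K (u.mapDomain CCell.base)
      = R (.base τ) + (bd K u - bd K (basePart K (V (.base τ)))).mapDomain CCell.base := by
    rw [cbd_mapDomain_base, hRV.R_base_eq, ← Finsupp.mapDomain_add, add_sub_cancel]
  have hlow' : IsLow K O (cbd K (u.mapDomain CCell.base)) (.base σ) := hcbd ▸
    hlow.add_of_lt fun _ hy =>
      pos_lt_of_mapDomain_base_ne_zero (fun ρ hρ => O.base_lt_base ρ σ (he ρ hρ)) hy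
  obtain ⟨x, hx, hxlow⟩ := hRV.exists_isLow_R_of_isLow_cbd
    (fun _ hy => pos_lt_of_mapDomain_base_ne_zero (fun ρ hρ => O.base_lt_base ρ τ (hu ρ hρ)) hy)
    hlow'
  exact hRV.reduced x (.base τ) (.base σ) (ne_of_apply_ne O.pos hx.ne) hxlow hlow

theorem not_suppOn_bd_sub_basePart (hRV : IsReduction K O R V) {τ : K.Cell}
    (hR : R (.base τ) ≠ 0) (u : K.Cell →₀ F) :
    ¬ SuppOn (bd K u - basePart K (V (.base τ))) fun ρ => K.tmin ρ < K.tmin τ := by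
  intro he
  set z := basePart K (V (.base τ))
  have hcbd : cbd K (u.mapDomain CCell.base)
      = V (.base τ) + (bd K u - z).mapDomain CCell.base := by
    rw [cbd_mapDomain_base, hRV.V_base_eq, ← Finsupp.mapDomain_add, add_sub_cancel]
  have hlow : IsLow K O (cbd K (u.mapDomain CCell.base)) (.base τ) := hcbd ▸
    (hRV.isLow_V _).add_of_lt fun _ hy =>
      pos_lt_of_mapDomain_base_ne_zero (fun ρ hρ => O.base_lt_base ρ τ (he ρ hρ)) hy
  obtain ⟨x, hx, hxlow⟩ := hRV.exists_isLow_R_of_isLow_cbd (N := O.pos .omega)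
    (fun _ hy => pos_lt_of_mapDomain_base_ne_zero (fun ρ _ => O.base_lt_omega ρ) hy) hlow
  cases x with
  | base x => exact hR (hRV.eq_zero_of_isLow_of_cbd_eq_zero (hRV.cbd_R_base x) hxlow)
  | omega => exact absurd hx (lt_irrefl _)
  | cone x => exact absurd (O.omega_lt_cone x) (not_lt.mpr hx.le)

end IsReduction

end Reduction

/-- Claim (ordinary pairs lift to apex representatives): let `(σ,τ)` be a persistence pair
of base simplices in the cone filtration with `min σ = b < d = min τ` (`low R[τ] = σ`).
Then the chain `ẑ` produced by `Lift-Cycle(V[τ], (d,b), 0)` is a relative cycle of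
`K̂(b,d]` and an apex representative: `[ẑ]` lies neither in the image of
`H(K̂(b-1,d]) → H(K̂(b,d])` nor in the image of `H(K̂(b,d-1]) → H(K̂(b,d])`. -/
theorem statement_13 {F : Type} [Field F] {n : ℤ} (K : DeltaComplex F n) (O : ConeOrder K)
    (R V : CCell K.Cell → (CCell K.Cell →₀ F)) (hRV : IsReduction K O R V)
    (σ τ : K.Cell) (b d : ℤ) (hb : K.tmin σ = b) (hd : K.tmin τ = d) (hbd : b < d)
    (hlow : IsLow K O (R (CCell.base τ)) (CCell.base σ))
    (t : K.Cell → ℤ) (ht : ValidTimes K (basePart K (V (CCell.base τ))) b d t) :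
    RelCycle K (inSub K (-1) d) (inSub K (-1) b)
      (liftCycle K (basePart K (V (CCell.base τ))) d b 0 t) ∧
    ¬ InImg K (inSub K (-1) d) (inSub K (-1) (b - 1))
        (inSub K (-1) d) (inSub K (-1) b)
        (liftCycle K (basePart K (V (CCell.base τ))) d b 0 t) ∧
    ¬ InImg K (inSub K (-1) (d - 1)) (inSub K (-1) b)
        (inSub K (-1) d) (inSub K (-1) b)
        (liftCycle K (basePart K (V (CCell.base τ))) d b 0 t) := by
  set z := basePart K (V (CCell.base τ))
  have hz : SuppOn z fun ρ => K.tmin ρ ≤ d := fun ρ hρ =>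
    hd ▸ O.tmin_le_of_pos_le (hRV.upper _ _ (by rwa [basePart_apply] at hρ))
  have hbz : SuppOn (bd K z) fun ρ => K.tmin ρ ≤ b := fun ρ hρ =>
    hb ▸ O.tmin_le_of_pos_le (hlow.2 _ (by
      rwa [hRV.R_base_eq, Finsupp.mapDomain_apply CCell.base_injective]))
  refine ⟨relCycle_liftCycle hbd ht hz hbz, fun h => ?_, fun h => ?_⟩
  · obtain ⟨u, v, hu, hv, huv⟩ := exists_bd_add_eq_of_inImg_birth K (pbd_liftCycle hbd ht) h
    refine hRV.not_suppOn_bd_sub_bd_basePart hlow (hu.mono fun ρ h => by omega) ?_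
    rw [show bd K u - bd K z = -v - (bd K z - bd K (meetPart K z b d)) by rw [← huv]; abel]
    exact (hv.neg.sub (suppOn_bd_sub_bd_meetPart hz)).mono fun ρ h => by omega
  · obtain ⟨u, v, hv, huv⟩ := exists_bd_add_eq_of_inImg_death K hbd h
    refine hRV.not_suppOn_bd_sub_basePart (fun h0 => hlow.1 (by rw [h0]; rfl)) u ?_
    rw [show bd K u - z = -v - (z - vslice K d (liftCycle K z d b 0 t)) by rw [← huv]; abel]
    exact (hv.neg.sub (suppOn_sub_vslice_liftCycle hbd ht hz)).mono fun ρ h => by omega
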